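/- Let V be a 4-dimensional complex vector space with a nondegenerate alternating bilinear form σ, and let A ∈ 𝔰𝔭(V,σ) with A ∘ A = 0 and rank A = 2. Then there exists s ∈ W with τ(s) ≠ s such that the fiber {t ∈ W : ε(t) = A} is exactly the two-element set {s, τ(s)}; i.e. the fiber of ε over a rank-2 element of Z consists of exactly two points interchanged by τ. -/

import Mathlib

/-!
Since `A` is `σ`-skew and `σ` alternating, `σ (A x) y` is symmetric in `x, y`; peeling off
rank-one terms `σ(A x, ·) A x` at non-isotropic vectors `x` diagonalises `A` as
`c₁ σ(v₁, ·) v₁ + c₂ σ(v₂, ·) v₂`, and over `ℂ` such a sum of two squares factors as `ε(v ⊗ w)`.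
Rank two makes `v, w` independent, so there are vectors `y` with prescribed `σ(v, y)`, `σ(w, y)`.
With them, `A² = 0` forces `σ(v, w) = 0`, and any `v' ⊗ w'` with `ε(v' ⊗ w') = A` has
`v', w' ∈ span {v, w}` (both spans are the range of `A`); comparing coefficients leaves only
`v' ⊗ w' = v ⊗ w` or `w ⊗ v`.
-/

open TensorProduct

/-- The endomorphism `ε(v ⊗ w) : x ↦ σ(v,x)·w + σ(w,x)·v` of `V`, for `v w : V`. -/
def eps {V : Type*} [AddCommGroup V] [Module ℂ V]
    (σ : V →ₗ[ℂ] V →ₗ[ℂ] ℂ) (v w : V) : V →ₗ[ℂ] V :=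
  (σ v).smulRight w + (σ w).smulRight v

open LinearMap Module Submodule

section SymmetricOperators

variable {K V : Type*} [Field K] [AddCommGroup V] [Module K V] {σ : V →ₗ[K] V →ₗ[K] K}

theorem isSymm_comp_of_isSkewAdjoint (hσ : σ.IsAlt) {A : V →ₗ[K] V} (hA : σ.IsSkewAdjoint A) :
    (σ ∘ₗ A).IsSymm :=
  isSymm_def.2 fun x y => by simpa [← hσ.neg (A y) x] using hA x y

theorem LinearMap.SeparatingLeft.surjective_pi {ι : Type*} [Finite ι] (hσ : σ.SeparatingLeft)
    {b : ι → V} (hb : LinearIndependent K b) :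
    Function.Surjective (LinearMap.pi fun i => σ (b i)) := by
  have hind : LinearIndependent K fun i => ⇑(σ (b i)) :=
    hb.map' (ltoFun K V K K ∘ₗ σ) (ker_eq_bot'.2 fun x hx => hσ x (congrFun hx))
  rw [← range_eq_top, ← span_eq (range _), coe_range]
  exact span_flip_eq_top_iff_linearIndependent.2 hind

theorem LinearMap.SeparatingLeft.exists_apply_eq_one_apply_eq_zero (hσ : σ.SeparatingLeft)
    {v w : V} (hvw : LinearIndependent K ![v, w]) : ∃ y, σ v y = 1 ∧ σ w y = 0 := by
  obtain ⟨y, hy⟩ := hσ.surjective_pi hvw (Pi.single 0 1)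
  exact ⟨y, congrFun hy 0, congrFun hy 1⟩

theorem exists_range_sub_smul_smulRight_lt [Invertible (2 : K)] (hσ : σ.SeparatingLeft)
    {A : V →ₗ[K] V} (hA : (σ ∘ₗ A).IsSymm) (hA0 : A ≠ 0) :
    ∃ (v : V) (c : K), (σ ∘ₗ (A - c • (σ v).smulRight v)).IsSymm ∧
      range (A - c • (σ v).smulRight v) < range A := by
  obtain ⟨x, hx⟩ : ∃ x, σ (A x) x ≠ 0 := by
    refine BilinForm.exists_bilinForm_self_ne_zero (fun h => hA0 ?_) hA
    ext y
    exact hσ _ fun z => congr($h y z)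
  set A' := A - (σ (A x) x)⁻¹ • (σ (A x)).smulRight (A x)
  have hA' : (σ ∘ₗ A').IsSymm := isSymm_def.2 fun y z => by
    have := hA.eq y z
    simp only [RingHom.id_apply, comp_apply] at this
    simp only [A', RingHom.id_apply, comp_apply, LinearMap.sub_apply, LinearMap.smul_apply,
      smulRight_apply, map_sub, map_smul, smul_eq_mul]
    linear_combination this
  have hA'x : A' x = 0 := by simp [A', hx]
  refine ⟨A x, _, hA', lt_of_le_of_ne ?_ fun h => hx ?_⟩
  · rintro _ ⟨y, rfl⟩
    exact sub_mem (mem_range_self A y) (smul_mem _ _ (smul_mem _ _ (mem_range_self A x)))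
  -- `A' z` is `σ`-orthogonal to `x` because `A' x = 0`, but `A x` is not.
  · obtain ⟨z, hz⟩ := h ▸ mem_range_self A x
    rw [← hz, ← comp_apply (f := σ), ← hA'.eq x z]
    simp [hA'x]

theorem exists_eq_sum_smul_smulRight [Invertible (2 : K)] (hσ : σ.SeparatingLeft) (n : ℕ)
    (A : V →ₗ[K] V) (hA : (σ ∘ₗ A).IsSymm) [FiniteDimensional K (range A)]
    (hn : finrank K (range A) ≤ n) :
    ∃ (v : Fin n → V) (c : Fin n → K), A = ∑ i, c i • (σ (v i)).smulRight (v i) := by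
  induction n generalizing A with
  | zero =>
    refine ⟨0, 0, ?_⟩
    simpa using range_eq_bot.1 (Submodule.finrank_eq_zero.1 (Nat.le_zero.1 hn))
  | succ n ih =>
    by_cases hA0 : A = 0
    · exact ⟨0, 0, by simp [hA0]⟩
    obtain ⟨v, c, hA', hlt⟩ := exists_range_sub_smul_smulRight_lt hσ hA hA0
    have := Submodule.finiteDimensional_of_le hlt.le
    obtain ⟨u, d, hu⟩ := ih _ hA' (by have := Submodule.finrank_lt_finrank_of_lt hlt; omega)
    refine ⟨Fin.cons v u, Fin.cons c d, ?_⟩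
    simp [Fin.sum_univ_succ, ← hu]

end SymmetricOperators

theorem LinearIndependent.tmul_ne_tmul_comm {K V : Type*} [Field K] [AddCommGroup V] [Module K V]
    {v w : V} (hvw : LinearIndependent K ![v, w]) : v ⊗ₜ[K] w ≠ w ⊗ₜ[K] v :=
  (hvw.tmul_of_isDomain hvw).injective.ne (a₁ := (0, 1)) (a₂ := (1, 0)) (by decide)

theorem smul_add_smul_tmul_smul_add_smul_eq_or {K V : Type*} [Field K] [AddCommGroup V]
    [Module K V] {a b c d : K} (hac : a * c = 0) (hbd : b * d = 0) (had : a * d + b * c = 1)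
    (v w : V) :
    (a • v + b • w) ⊗ₜ[K] (c • v + d • w) = v ⊗ₜ w ∨
      (a • v + b • w) ⊗ₜ[K] (c • v + d • w) = w ⊗ₜ v := by
  rcases mul_eq_zero.1 hac with rfl | rfl
  · have hbc : b * c = 1 := by linear_combination had
    obtain rfl : d = 0 := (mul_eq_zero.1 hbd).resolve_left (left_ne_zero_of_mul_eq_one hbc)
    right
    simp only [zero_smul, zero_add, add_zero, smul_tmul_smul, hbc, one_smul]
  · have had' : a * d = 1 := by linear_combination had
    obtain rfl : b = 0 := (mul_eq_zero.1 hbd).resolve_right (right_ne_zero_of_mul_eq_one had')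
    left
    simp only [zero_smul, zero_add, add_zero, smul_tmul_smul, had', one_smul]

section Eps

variable {V : Type*} [AddCommGroup V] [Module ℂ V] {σ : V →ₗ[ℂ] V →ₗ[ℂ] ℂ} {v w : V}

@[simp]
theorem eps_apply (v w x : V) : eps σ v w x = σ v x • w + σ w x • v := rfl

theorem eps_comm (v w : V) : eps σ v w = eps σ w v := add_comm _ _

theorem exists_eps_eq_smul_smulRight_add_smul_smulRight (c₁ c₂ : ℂ) (v₁ v₂ : V) :
    ∃ v w, eps σ v w = c₁ • (σ v₁).smulRight v₁ + c₂ • (σ v₂).smulRight v₂ := by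
  -- `c₁ X² + c₂ Y² = 2 (p X + q Y) (p X - q Y)` when `2 p² = c₁` and `2 q² = -c₂`.
  obtain ⟨p, hp⟩ := IsAlgClosed.exists_pow_nat_eq (c₁ / 2) two_pos
  obtain ⟨q, hq⟩ := IsAlgClosed.exists_pow_nat_eq (-c₂ / 2) two_pos
  refine ⟨p • v₁ + q • v₂, p • v₁ - q • v₂, LinearMap.ext fun x => ?_⟩
  simp only [eps_apply, map_add, map_sub, map_smul, LinearMap.add_apply, LinearMap.sub_apply,
    LinearMap.smul_apply, smulRight_apply, smul_eq_mul]
  match_scalars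
  · linear_combination 2 * σ v₁ x * hp
  · linear_combination -2 * σ v₂ x * hq

theorem range_eps_le_span (v w : V) : range (eps σ v w) ≤ span ℂ {v, w} := by
  rintro _ ⟨x, rfl⟩
  exact mem_span_pair.2 ⟨σ w x, σ v x, by simp [add_comm]⟩

theorem range_eps_eq_span_of_finrank_eq_two (h : finrank ℂ (range (eps σ v w)) = 2) :
    range (eps σ v w) = span ℂ {v, w} := by
  have := FiniteDimensional.span_of_finite ℂ (Set.toFinite {v, w})
  have hle := finrank_range_le_card (R := ℂ) ![v, w]
  rw [Matrix.range_cons_cons_empty] at hle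
  exact eq_of_le_of_finrank_le (range_eps_le_span v w) (h ▸ hle)

theorem linearIndependent_of_finrank_range_eps_eq_two (h : finrank ℂ (range (eps σ v w)) = 2) :
    LinearIndependent ℂ ![v, w] := by
  rw [linearIndependent_iff_card_eq_finrank_span, Set.finrank, Matrix.range_cons_cons_empty,
    ← range_eps_eq_span_of_finrank_eq_two h, h, Fintype.card_fin]

theorem exists_eps_eq_of_finrank_range_eq_two (hσ : σ.SeparatingLeft) {A : V →ₗ[ℂ] V}
    (hA : (σ ∘ₗ A).IsSymm) (hrk : finrank ℂ (range A) = 2) : ∃ v w, eps σ v w = A := by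
  have := Module.finite_of_finrank_eq_succ hrk
  obtain ⟨u, c, rfl⟩ := exists_eq_sum_smul_smulRight hσ 2 A hA hrk.le
  simpa [Fin.sum_univ_two] using
    exists_eps_eq_smul_smulRight_add_smul_smulRight (c 0) (c 1) (u 0) (u 1)

theorem apply_eq_zero_of_eps_comp_self_eq_zero (hσ : σ.SeparatingLeft) (halt : σ.IsAlt)
    (hvw : LinearIndependent ℂ ![v, w]) (h : eps σ v w ∘ₗ eps σ v w = 0) : σ v w = 0 := by
  obtain ⟨y, hvy, hwy⟩ := hσ.exists_apply_eq_one_apply_eq_zero hvw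
  have hw : eps σ v w (eps σ v w y) = σ v w • w := by simp [hvy, hwy, halt w]
  rw [← comp_apply, h, LinearMap.zero_apply, eq_comm, smul_eq_zero] at hw
  exact hw.resolve_right (hvw.ne_zero 1)

theorem tmul_eq_or_tmul_eq_of_eps_eq (hσ : σ.SeparatingLeft)
    (hrk : finrank ℂ (range (eps σ v w)) = 2) {v' w' : V} (h : eps σ v' w' = eps σ v w) :
    v' ⊗ₜ[ℂ] w' = v ⊗ₜ w ∨ v' ⊗ₜ[ℂ] w' = w ⊗ₜ v := by
  have hvw := linearIndependent_of_finrank_range_eps_eq_two hrk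
  have hspan : span ℂ {v', w'} = span ℂ {v, w} := by
    rw [← range_eps_eq_span_of_finrank_eq_two hrk, ← h,
      range_eps_eq_span_of_finrank_eq_two (h ▸ hrk)]
  obtain ⟨a, b, rfl⟩ := mem_span_pair.1 (hspan ▸ subset_span (by simp) : v' ∈ span ℂ {v, w})
  obtain ⟨c, d, rfl⟩ := mem_span_pair.1 (hspan ▸ subset_span (by simp) : w' ∈ span ℂ {v, w})
  obtain ⟨y₁, hvy₁, hwy₁⟩ := hσ.exists_apply_eq_one_apply_eq_zero hvw
  obtain ⟨y₂, hwy₂, hvy₂⟩ :=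
    hσ.exists_apply_eq_one_apply_eq_zero (LinearIndependent.pair_symm_iff.1 hvw)
  have e₁ := congr($h y₁)
  have e₂ := congr($h y₂)
  simp only [eps_apply, map_add, map_smul, LinearMap.add_apply, LinearMap.smul_apply, smul_eq_mul,
    hvy₁, hwy₁, hvy₂, hwy₂] at e₁ e₂
  obtain ⟨hac, had⟩ := LinearIndependent.pair_iff.1 hvw (2 * a * c) (a * d + b * c - 1)
    (by linear_combination (norm := module) e₁)
  obtain ⟨-, hbd⟩ := LinearIndependent.pair_iff.1 hvw (a * d + b * c - 1) (2 * b * d)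
    (by linear_combination (norm := module) e₂)
  exact smul_add_smul_tmul_smul_add_smul_eq_or (by linear_combination hac / 2)
    (by linear_combination hbd / 2) (by linear_combination had) v w

end Eps

theorem eps_fiber_over_rank_two_general
    {V : Type*} [AddCommGroup V] [Module ℂ V]
    (σ : V →ₗ[ℂ] V →ₗ[ℂ] ℂ)
    (halt : ∀ v : V, σ v v = 0)
    (hnd : ∀ v : V, (∀ w : V, σ v w = 0) → v = 0)
    (A : V →ₗ[ℂ] V)
    (hA : ∀ v w : V, σ (A v) w + σ v (A w) = 0)
    (hA2 : A ∘ₗ A = 0)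
    (hrk : Module.finrank ℂ (LinearMap.range A) = 2) :
    ∃ v w : V, σ v w = 0 ∧ v ⊗ₜ[ℂ] w ≠ w ⊗ₜ[ℂ] v ∧
      {t : V ⊗[ℂ] V | ∃ v' w' : V, σ v' w' = 0 ∧ t = v' ⊗ₜ[ℂ] w' ∧ eps σ v' w' = A} =
        {v ⊗ₜ[ℂ] w, w ⊗ₜ[ℂ] v} := by
  have hsymm : (σ ∘ₗ A).IsSymm :=
    isSymm_comp_of_isSkewAdjoint halt fun x y => by simp [eq_neg_of_add_eq_zero_left (hA x y)]
  obtain ⟨v, w, rfl⟩ := exists_eps_eq_of_finrank_range_eq_two hnd hsymm hrk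
  have hvw := linearIndependent_of_finrank_range_eps_eq_two hrk
  have hσvw := apply_eq_zero_of_eps_comp_self_eq_zero hnd halt hvw hA2
  refine ⟨v, w, hσvw, hvw.tmul_ne_tmul_comm, Set.ext fun t => ⟨?_, ?_⟩⟩
  · rintro ⟨v', w', -, rfl, h⟩
    exact tmul_eq_or_tmul_eq_of_eps_eq hnd hrk h
  · rintro (rfl | rfl)
    · exact ⟨v, w, hσvw, rfl, rfl⟩
    · exact ⟨w, v, by rw [← LinearMap.IsAlt.neg halt, hσvw, neg_zero], rfl, eps_comm w v⟩

/-- Let `V` be a 4-dimensional complex vector space with a nondegenerate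
alternating bilinear form `σ`, and let `A ∈ 𝔰𝔭(V,σ)` with `A ∘ A = 0` and `rank A = 2`.
Then there exists `s = v ⊗ w ∈ W` with `τ(s) ≠ s` such that the fiber
`{t ∈ W : ε(t) = A}` is exactly the two-element set `{s, τ(s)} = {v ⊗ w, w ⊗ v}`;
i.e. the fiber of `ε` over a rank-2 element of `Z` consists of exactly two points
interchanged by `τ`. -/
theorem eps_fiber_over_rank_two
    {V : Type*} [AddCommGroup V] [Module ℂ V] [FiniteDimensional ℂ V]
    (hdim : Module.finrank ℂ V = 4)
    (σ : V →ₗ[ℂ] V →ₗ[ℂ] ℂ)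
    (halt : ∀ v : V, σ v v = 0)
    (hnd : ∀ v : V, (∀ w : V, σ v w = 0) → v = 0)
    (A : V →ₗ[ℂ] V)
    (hA : ∀ v w : V, σ (A v) w + σ v (A w) = 0)
    (hA2 : A ∘ₗ A = 0)
    (hrk : Module.finrank ℂ (LinearMap.range A) = 2) :
    ∃ v w : V, σ v w = 0 ∧ v ⊗ₜ[ℂ] w ≠ w ⊗ₜ[ℂ] v ∧
      {t : V ⊗[ℂ] V | ∃ v' w' : V, σ v' w' = 0 ∧ t = v' ⊗ₜ[ℂ] w' ∧ eps σ v' w' = A} =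
        {v ⊗ₜ[ℂ] w, w ⊗ₜ[ℂ] v} :=
  eps_fiber_over_rank_two_general σ halt hnd A hA hA2 hrk
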